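/- arXiv:2603.12241 — 2 statements merged into one kernel-verified Lean document; each statement's English description precedes it below -/
import Mathlib

section
/- Let d ≥ 1. There exists a constant C > 0 depending only on d such that for all x, y ∈ ℝ^d and all 0 < s < t: ∫_{ℝ^d} |(x−y)/t − (x−w)/s| · ψ^s(x−w) ψ^{t−s}(w−y) / ψ^t(x−y) dw ≤ C √((t−s)/(s t)). -/
open MeasureTheory Real Set

noncomputable section

abbrev Euc (d : ℕ) := EuclideanSpace ℝ (Fin d)

/-- Gaussian heat kernel `ψ^t(x)` on `ℝ^d`. -/
def heatK (d : ℕ) (t : ℝ) (x : Euc d) : ℝ :=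
  (2 * Real.pi * t) ^ (-(d : ℝ) / 2) * Real.exp (-‖x‖ ^ 2 / (2 * t))

/-!
Completing the square gives the Gaussian bridge identity
`ψ^s(x - w) ψ^{t-s}(w - y) = ψ^t(x - y) ψ^σ(w - m)` with `σ = s(t - s)/t` and
`m = x + (s/t)(y - x)`, and `(x - y)/t - (x - w)/s = (w - m)/s`. The integral is therefore
`s⁻¹` times the first absolute moment of `ψ^σ`, which is `O(√σ)` because
`r e^{-r²/(4σ)} ≤ 2√σ`; finally `√σ / s = √((t - s)/(s t))`.
-/

lemma heatK_pos (d : ℕ) {t : ℝ} (ht : 0 < t) (x : Euc d) : 0 < heatK d t x := by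
  unfold heatK
  have := pi_pos
  positivity

lemma norm_sq_div_add_norm_sq_div {E : Type*} [NormedAddCommGroup E] [InnerProductSpace ℝ E]
    (x y w : E) {s t : ℝ} (hs : 0 < s) (hst : s < t) :
    ‖x - w‖ ^ 2 / (2 * s) + ‖w - y‖ ^ 2 / (2 * (t - s)) =
      ‖x - y‖ ^ 2 / (2 * t) + ‖w - (x + (s / t) • (y - x))‖ ^ 2 / (2 * (s * (t - s) / t)) := by
  have ht : 0 < t := hs.trans hst
  have hts : 0 < t - s := sub_pos.2 hst
  have hxy : x - y = (x - w) + (w - y) := by abel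
  have hwm : w - (x + (s / t) • (y - x)) = (s / t - 1) • (x - w) + (s / t) • (w - y) := by
    module
  rw [hwm, hxy, norm_add_sq_real, norm_add_sq_real, norm_smul, norm_smul, real_inner_smul_left,
    real_inner_smul_right]
  simp only [Real.norm_eq_abs, mul_pow, sq_abs]
  field_simp
  ring

lemma heatK_mul_heatK (d : ℕ) (x y w : Euc d) {s t : ℝ} (hs : 0 < s) (hst : s < t) :
    heatK d s (x - w) * heatK d (t - s) (w - y) =
      heatK d t (x - y) * heatK d (s * (t - s) / t) (w - (x + (s / t) • (y - x))) := by
  have ht : 0 < t := hs.trans hst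
  have hts : 0 < t - s := sub_pos.2 hst
  have := pi_pos
  have hprod : (2 * π * s) * (2 * π * (t - s)) = (2 * π * t) * (2 * π * (s * (t - s) / t)) := by
    field_simp
  have hexp := norm_sq_div_add_norm_sq_div x y w hs hst
  unfold heatK
  rw [mul_mul_mul_comm, mul_mul_mul_comm _ (rexp _), ← mul_rpow (by positivity) (by positivity),
    ← mul_rpow (by positivity) (by positivity), ← exp_add, ← exp_add, hprod]
  congr 2
  linear_combination -hexp

lemma mul_exp_neg_sq_div_le {σ : ℝ} (hσ : 0 < σ) (r : ℝ) :
    r * rexp (-(r ^ 2 / (4 * σ))) ≤ 2 * √σ := by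
  -- `z ≤ 1 + z² ≤ e^{z²}` with `z = r / (2√σ)`
  have hz : r / (2 * √σ) ≤ rexp ((r / (2 * √σ)) ^ 2) := by
    nlinarith [add_one_le_exp ((r / (2 * √σ)) ^ 2), sq_nonneg (r / (2 * √σ) - 1)]
  have hsq : (r / (2 * √σ)) ^ 2 = r ^ 2 / (4 * σ) := by
    rw [div_pow, mul_pow, sq_sqrt hσ.le]
    ring
  rw [hsq, div_le_iff₀ (by positivity)] at hz
  rw [exp_neg, ← div_eq_mul_inv, div_le_iff₀ (exp_pos _)]
  linarith

lemma norm_mul_heatK_le (d : ℕ) {σ : ℝ} (hσ : 0 < σ) (u : Euc d) :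
    ‖u‖ * heatK d σ u ≤
      2 * √σ * (2 * π * σ) ^ (-(d : ℝ) / 2) * rexp (-(4 * σ)⁻¹ * ‖u‖ ^ 2) := by
  have := pi_pos
  have hsplit : rexp (-‖u‖ ^ 2 / (2 * σ)) =
      rexp (-(‖u‖ ^ 2 / (4 * σ))) * rexp (-(4 * σ)⁻¹ * ‖u‖ ^ 2) := by
    rw [← exp_add]
    congr 1
    field_simp
    ring
  unfold heatK
  rw [hsplit]
  calc _ = (2 * π * σ) ^ (-(d : ℝ) / 2) * (‖u‖ * rexp (-(‖u‖ ^ 2 / (4 * σ)))) *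
        rexp (-(4 * σ)⁻¹ * ‖u‖ ^ 2) := by ring
    _ ≤ (2 * π * σ) ^ (-(d : ℝ) / 2) * (2 * √σ) * rexp (-(4 * σ)⁻¹ * ‖u‖ ^ 2) := by
      gcongr _ * ?_ * _
      exact mul_exp_neg_sq_div_le hσ _
    _ = _ := by ring

lemma integral_norm_mul_heatK_le (d : ℕ) {σ : ℝ} (hσ : 0 < σ) :
    ∫ u : Euc d, ‖u‖ * heatK d σ u ≤ 2 ^ ((d : ℝ) / 2 + 1) * √σ := by
  have := pi_pos
  have hb : 0 < (4 * σ)⁻¹ := by positivity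
  have hgauss := GaussianFourier.integral_rexp_neg_mul_sq_norm (V := Euc d) hb
  have hint : Integrable (fun u : Euc d ↦ rexp (-(4 * σ)⁻¹ * ‖u‖ ^ 2)) :=
    Integrable.of_integral_ne_zero (by rw [hgauss]; positivity)
  have hconst : (2 * π * σ) ^ (-(d : ℝ) / 2) * (π / (4 * σ)⁻¹) ^ ((d : ℝ) / 2) =
      2 ^ ((d : ℝ) / 2) := by
    have h2πσ : 0 < 2 * π * σ := by positivity
    rw [show π / (4 * σ)⁻¹ = 2 * (2 * π * σ) by field_simp; ring,
      mul_rpow zero_le_two h2πσ.le, neg_div, rpow_neg h2πσ.le, mul_left_comm,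
      inv_mul_cancel₀ (rpow_pos_of_pos h2πσ _).ne', mul_one]
  calc ∫ u : Euc d, ‖u‖ * heatK d σ u
      ≤ ∫ u : Euc d, 2 * √σ * (2 * π * σ) ^ (-(d : ℝ) / 2) * rexp (-(4 * σ)⁻¹ * ‖u‖ ^ 2) :=
        integral_mono_of_nonneg
          (.of_forall fun u ↦ mul_nonneg (norm_nonneg u) (heatK_pos d hσ u).le)
          (hint.const_mul _) (.of_forall (norm_mul_heatK_le d hσ))
    _ = 2 ^ ((d : ℝ) / 2 + 1) * √σ := by
      rw [integral_const_mul, hgauss, finrank_euclideanSpace_fin, rpow_add_one two_ne_zero,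
        ← hconst]
      ring

lemma bridge_integrand_eq (d : ℕ) (x y w : Euc d) {s t : ℝ} (hs : 0 < s) (hst : s < t) :
    ‖(1 / t) • (x - y) - (1 / s) • (x - w)‖ *
        (heatK d s (x - w) * heatK d (t - s) (w - y) / heatK d t (x - y)) =
      s⁻¹ * (‖w - (x + (s / t) • (y - x))‖ *
        heatK d (s * (t - s) / t) (w - (x + (s / t) • (y - x)))) := by
  have ht : 0 < t := hs.trans hst
  have hdrift : (1 / t) • (x - y) - (1 / s) • (x - w) = s⁻¹ • (w - (x + (s / t) • (y - x))) := by
    match_scalars <;> field_simp; ring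
  rw [heatK_mul_heatK d x y w hs hst, mul_div_cancel_left₀ _ (heatK_pos d ht _).ne', hdrift,
    norm_smul, norm_inv, Real.norm_of_nonneg hs.le, mul_assoc]

theorem statement15_general (d : ℕ) :
    ∃ C : ℝ, 0 < C ∧
      ∀ (x y : Euc d) (s t : ℝ), 0 < s → s < t →
        (∫ w : Euc d, ‖(1 / t) • (x - y) - (1 / s) • (x - w)‖ *
            (heatK d s (x - w) * heatK d (t - s) (w - y) / heatK d t (x - y))) ≤
          C * Real.sqrt ((t - s) / (s * t)) := by
  refine ⟨2 ^ ((d : ℝ) / 2 + 1), by positivity, fun x y s t hs hst ↦ ?_⟩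
  have ht : 0 < t := hs.trans hst
  have hts : 0 < t - s := sub_pos.2 hst
  have hσ : s * (t - s) / t = s ^ 2 * ((t - s) / (s * t)) := by field_simp
  calc _ = ∫ w : Euc d, s⁻¹ * (‖w - (x + (s / t) • (y - x))‖ *
        heatK d (s * (t - s) / t) (w - (x + (s / t) • (y - x)))) :=
        integral_congr_ae (.of_forall fun w ↦ bridge_integrand_eq d x y w hs hst)
    _ = s⁻¹ * ∫ u : Euc d, ‖u‖ * heatK d (s * (t - s) / t) u := by
      rw [integral_const_mul, integral_sub_right_eq_self (fun u ↦ ‖u‖ * heatK d _ u)]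
    _ ≤ s⁻¹ * (2 ^ ((d : ℝ) / 2 + 1) * √(s * (t - s) / t)) := by
      gcongr
      exact integral_norm_mul_heatK_le d (by positivity)
    _ = _ := by
      rw [hσ, sqrt_mul (sq_nonneg s), sqrt_sq hs.le]
      field_simp

/-- first-moment bound for the Gaussian bridge density. -/
theorem statement15 (d : ℕ) (hd : 1 ≤ d) :
    ∃ C : ℝ, 0 < C ∧
      ∀ (x y : Euc d) (s t : ℝ), 0 < s → s < t →
        (∫ w : Euc d, ‖(1 / t) • (x - y) - (1 / s) • (x - w)‖ *
            (heatK d s (x - w) * heatK d (t - s) (w - y) / heatK d t (x - y))) ≤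
          C * Real.sqrt ((t - s) / (s * t)) :=
  statement15_general d

end
end

section
/- For every s > 0 there exists a constant C_s > 0 such that for all h > 0, all ν > 0 and all δ ≥ 2ν: 0 ≤ ∫_δ^∞ ( e^{-⌊t⌋_ν h} − e^{-t h} ) dt ≤ C_s ν h^{-s} (δ − ν)^{-s}, where ⌊t⌋_ν := ν ⌊t/ν⌋ denotes the largest integer multiple of ν not exceeding t. -/
/-!
Write `u t = ν⌊t/ν⌋`, so that `t - ν < u t ≤ t`. Then the integrand is nonnegative and at most
`e^{-(t-ν)h} - e^{-th} ≤ νh e^{νh} e^{-th}`, whose integral over `(δ, ∞)` is `ν e^{-(δ-ν)h}`.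
Finally `e^{-x} ≤ s^s x^{-s}` for `x = (δ - ν)h > 0`, because `x/s ≤ e^{x/s}`.
-/

open MeasureTheory Real Set

lemma mul_floor_div_le {ν : ℝ} (hν : 0 < ν) (t : ℝ) : ν * ⌊t / ν⌋ ≤ t :=
  (le_div_iff₀' hν).1 (Int.floor_le _)

lemma sub_lt_mul_floor_div {ν : ℝ} (hν : 0 < ν) (t : ℝ) : t - ν < ν * ⌊t / ν⌋ := by
  have h := (div_lt_iff₀' hν).1 (Int.lt_floor_add_one (t / ν))
  linarith

lemma exp_neg_le_rpow_mul_rpow_neg {s x : ℝ} (hs : 0 < s) (hx : 0 < x) :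
    exp (-x) ≤ s ^ s * x ^ (-s) := by
  have hexp : x / s ≤ exp (x / s) := by linarith [add_one_le_exp (x / s)]
  have hpow : x ^ s ≤ s ^ s * exp x :=
    calc x ^ s = s ^ s * (x / s) ^ s := by
          rw [← mul_rpow hs.le (by positivity), mul_div_cancel₀ _ hs.ne']
      _ ≤ s ^ s * exp (x / s) ^ s := by gcongr
      _ = s ^ s * exp x := by rw [← exp_mul, div_mul_cancel₀ _ hs.ne']
  rw [exp_neg, rpow_neg hx.le, ← div_eq_mul_inv, le_div_iff₀ (by positivity),
    inv_mul_le_iff₀ (exp_pos x)]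
  linarith

lemma exp_neg_mul_sub_exp_neg_mul_le {u t ν h : ℝ} (hh : 0 ≤ h) (hu : t - ν ≤ u) :
    exp (-u * h) - exp (-t * h) ≤ ν * h * exp (ν * h) * exp (-h * t) := by
  have hshift : exp (-u * h) ≤ exp (ν * h) * exp (-h * t) := by
    rw [← exp_add]
    exact exp_le_exp.2 (by nlinarith)
  -- `e^x - 1 ≤ x e^x`: the tangent line of `exp` at `x`, evaluated at `0`.
  have htangent : exp (ν * h) - 1 ≤ ν * h * exp (ν * h) := by
    have h1 := mul_le_mul_of_nonneg_right (one_sub_le_exp_neg (ν * h)) (exp_pos (ν * h)).le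
    rw [← exp_add, neg_add_cancel, exp_zero, sub_mul, one_mul] at h1
    linarith
  have hexp : exp (-t * h) = exp (-h * t) := by ring_nf
  nlinarith [exp_pos (-h * t)]

section RoundingDown

variable {u : ℝ → ℝ} {ν h : ℝ}

lemma integral_exp_neg_round_sub_nonneg (hh : 0 ≤ h) (hu : ∀ t, u t ≤ t) (δ : ℝ) :
    0 ≤ ∫ t in Ioi δ, (exp (-u t * h) - exp (-t * h)) :=
  setIntegral_nonneg measurableSet_Ioi fun t _ =>
    sub_nonneg.2 (exp_le_exp.2 (by nlinarith [hu t]))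

lemma integral_exp_neg_round_sub_le (hh : 0 < h) (hmeas : Measurable u) (hu : ∀ t, u t ≤ t)
    (hu' : ∀ t, t - ν ≤ u t) (δ : ℝ) :
    ∫ t in Ioi δ, (exp (-u t * h) - exp (-t * h)) ≤ ν * exp (-((δ - ν) * h)) := by
  have hmaj : IntegrableOn (fun t => ν * h * exp (ν * h) * exp (-h * t)) (Ioi δ) :=
    (integrableOn_exp_mul_Ioi (neg_lt_zero.2 hh) δ).const_mul _
  have hint : IntegrableOn (fun t => exp (-u t * h) - exp (-t * h)) (Ioi δ) := by
    refine hmaj.mono' (by fun_prop) (Filter.Eventually.of_forall fun t => ?_)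
    rw [norm_of_nonneg (sub_nonneg.2 (exp_le_exp.2 (by nlinarith [hu t])))]
    exact exp_neg_mul_sub_exp_neg_mul_le hh.le (hu' t)
  calc ∫ t in Ioi δ, (exp (-u t * h) - exp (-t * h))
      ≤ ∫ t in Ioi δ, ν * h * exp (ν * h) * exp (-h * t) :=
        setIntegral_mono_on hint hmaj measurableSet_Ioi fun t _ =>
          exp_neg_mul_sub_exp_neg_mul_le hh.le (hu' t)
    _ = ν * exp (-((δ - ν) * h)) := by
        rw [integral_const_mul, integral_exp_mul_Ioi (neg_lt_zero.2 hh),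
          show -((δ - ν) * h) = ν * h + -h * δ by ring, exp_add]
        field_simp

end RoundingDown

/-- Riemann-sum error estimate for `e^{-th}`, with `⌊t⌋_ν := ν⌊t/ν⌋`. -/
theorem statement19 (s : ℝ) (hs : 0 < s) :
    ∃ C : ℝ, 0 < C ∧
      ∀ h ν δ : ℝ, 0 < h → 0 < ν → 2 * ν ≤ δ →
        0 ≤ (∫ t in Set.Ioi δ,
              (Real.exp (-(ν * (⌊t / ν⌋ : ℝ)) * h) - Real.exp (-t * h))) ∧
        (∫ t in Set.Ioi δ,
            (Real.exp (-(ν * (⌊t / ν⌋ : ℝ)) * h) - Real.exp (-t * h))) ≤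
          C * ν * h ^ (-s) * (δ - ν) ^ (-s) := by
  refine ⟨s ^ s, by positivity, fun h ν δ hh hν hδ => ?_⟩
  have hmeas : Measurable fun t : ℝ => ν * (⌊t / ν⌋ : ℝ) := by fun_prop
  have hδν : 0 < δ - ν := by linarith
  refine ⟨integral_exp_neg_round_sub_nonneg hh.le (mul_floor_div_le hν) δ, ?_⟩
  calc _ ≤ ν * exp (-((δ - ν) * h)) :=
        integral_exp_neg_round_sub_le hh hmeas (mul_floor_div_le hν)
          (fun t => (sub_lt_mul_floor_div hν t).le) δ
    _ ≤ ν * (s ^ s * ((δ - ν) * h) ^ (-s)) := by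
        gcongr
        exact exp_neg_le_rpow_mul_rpow_neg hs (by positivity)
    _ = s ^ s * ν * h ^ (-s) * (δ - ν) ^ (-s) := by
        rw [mul_rpow hδν.le hh.le]; ring
end
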